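/- arXiv:1910.01482 — 5 statements merged into one kernel-verified Lean document; each statement's English description precedes it below -/
import Mathlib

section
/- Fix h > 0, λ > 0, p > 0. Let φ : ℝ × ℤ → ℂ be differentiable in t at each n, and let a₀, a₂ : ℝ × ℤ → ℝ and a₁ : ℝ × ℤ → ℝ be arbitrary. Suppose that for all t ∈ ℝ and n ∈ ℤ, i·(∂ₜφ(t,n) − i a₀(t,n) φ(t,n)) + D₁⁻D₁⁺φ(t,n) − a₂(t,n)² φ(t,n) + λ|φ(t,n)|^{2p} φ(t,n) = 0, where the covariant derivatives are taken with gauge a₁(t,·). Then for all t ∈ ℝ and n ∈ ℤ, (1/2)·∂ₜ|φ(t,n)|² + (1/h)·( Im( conj(φ(t,n)) D₁⁺φ(t,n) ) − Im( conj(φ(t,n−1)) D₁⁺φ(t,n−1) ) ) = 0. -/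
/-!
Multiply the equation by `φ̄` and take imaginary parts. The real potential terms
`(a₀ - a₂² + λ|φ|^{2p}) |φ|²` drop out and `Im(i φ̄ ∂ₜφ) = ½ ∂ₜ|φ|²`. In `φ̄(n) D₁⁻D₁⁺φ(n)`
the gauge-transported cross term `(φ̄(n) e^{i h a(n-1)} − φ̄(n-1)) D₁⁺φ(n-1)` equals
`h |D₁⁺φ(n-1)|²`, which is real, so the imaginary part is the backward difference of the
current `Im(φ̄ D₁⁺φ)`.
-/

/-- Discrete forward covariant derivative `D₁⁺φ(n) = (e^{−i h a(n)} φ(n+1) − φ(n))/h`,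
where `a(n)` is the gauge component `A₁` at the half-site `n + 1/2`. -/
noncomputable def D1p (h : ℝ) (a : ℤ → ℝ) (φ : ℤ → ℂ) (n : ℤ) : ℂ :=
  (Complex.exp (-Complex.I * h * a n) * φ (n + 1) - φ n) / h

/-- Discrete backward covariant derivative `D₁⁻φ(n) = (φ(n) − e^{i h a(n−1)} φ(n−1))/h`. -/
noncomputable def D1m (h : ℝ) (a : ℤ → ℝ) (φ : ℤ → ℂ) (n : ℤ) : ℂ :=
  (φ n - Complex.exp (Complex.I * h * a (n - 1)) * φ (n - 1)) / h

open Complex ComplexConjugate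

theorem re_conj_mul_add_im_conj_mul_eq_zero (z d M : ℂ) (V : ℝ)
    (h : I * d + M + V * z = 0) : (conj z * d).re + (conj z * M).im = 0 := by
  have him := congrArg Complex.im (congrArg (conj z * ·) h)
  simp only [mul_add, mul_zero, add_im, zero_im] at him
  have hV : (conj z * (V * z)).im = 0 := by
    simp only [mul_im, mul_re, conj_re, conj_im, ofReal_re, ofReal_im]
    ring
  have hI : (conj z * (I * d)).im = (conj z * d).re := by
    rw [mul_left_comm, I_mul_im]
  linarith

theorem conj_exp_neg_I_mul_ofReal (x : ℝ) : conj (exp (-I * x)) = exp (I * x) := by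
  rw [← exp_conj, map_mul, map_neg, conj_I, conj_ofReal, neg_neg]

theorem im_conj_gauge_sub_mul_D1p_eq_zero (h : ℝ) (a : ℤ → ℝ) (φ : ℤ → ℂ) (n : ℤ) :
    ((conj (φ (n + 1)) * exp (I * h * a n) - conj (φ n)) * D1p h a φ n).im = 0 := by
  set w := exp (-I * h * a n) * φ (n + 1) - φ n
  have hconj : conj (φ (n + 1)) * exp (I * h * a n) - conj (φ n) = conj w := by
    have := conj_exp_neg_I_mul_ofReal (h * a n)
    push_cast at this
    simp only [w, map_sub, map_mul, mul_assoc, this]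
    ring
  rw [hconj, D1p, ← mul_div_assoc, div_ofReal_im, mul_comm, mul_conj, ofReal_im, zero_div]

theorem im_conj_mul_D1m_D1p (h : ℝ) (a : ℤ → ℝ) (φ : ℤ → ℂ) (n : ℤ) :
    (conj (φ n) * D1m h a (D1p h a φ) n).im
      = (1 / h) * ((conj (φ n) * D1p h a φ n).im
          - (conj (φ (n - 1)) * D1p h a φ (n - 1)).im) := by
  have hreal := im_conj_gauge_sub_mul_D1p_eq_zero h a φ (n - 1)
  rw [sub_add_cancel] at hreal
  have hsplit : conj (φ n) * D1m h a (D1p h a φ) n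
      = (conj (φ n) * D1p h a φ n
          - (conj (φ n) * exp (I * h * a (n - 1)) - conj (φ (n - 1))) * D1p h a φ (n - 1)
          - conj (φ (n - 1)) * D1p h a φ (n - 1)) / h := by
    rw [D1m]
    ring
  rw [hsplit, div_ofReal_im, sub_im, sub_im, hreal]
  ring

theorem discrete_CSS_balance_equation_general
    (h lam p : ℝ)
    (φ : ℝ → ℤ → ℂ) (a₀ a₁ a₂ : ℝ → ℤ → ℝ)
    (hdiff : ∀ n : ℤ, Differentiable ℝ (fun t => φ t n))
    (heq : ∀ (t : ℝ) (n : ℤ),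
      Complex.I * (deriv (fun s => φ s n) t - Complex.I * (a₀ t n : ℂ) * φ t n)
        + D1m h (a₁ t) (D1p h (a₁ t) (φ t)) n
        - ((a₂ t n : ℂ)) ^ 2 * φ t n
        + (lam : ℂ) * ((‖φ t n‖ ^ (2 * p) : ℝ) : ℂ) * φ t n = 0) :
    ∀ (t : ℝ) (n : ℤ),
      (1 / 2) * deriv (fun s => ‖φ s n‖ ^ 2) t
        + (1 / h) * (((starRingEnd ℂ) (φ t n) * D1p h (a₁ t) (φ t) n).im
            - ((starRingEnd ℂ) (φ t (n - 1)) * D1p h (a₁ t) (φ t) (n - 1)).im) = 0 := by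
  intro t n
  have hmass : deriv (fun s => ‖φ s n‖ ^ 2) t
      = 2 * (conj (φ t n) * deriv (fun s => φ s n) t).re := by
    rw [(hdiff n t).hasDerivAt.norm_sq.deriv, Complex.inner, mul_comm (deriv _ _)]
  have hlocal := re_conj_mul_add_im_conj_mul_eq_zero (φ t n) (deriv (fun s => φ s n) t)
    (D1m h (a₁ t) (D1p h (a₁ t) (φ t)) n) (a₀ t n - a₂ t n ^ 2 + lam * ‖φ t n‖ ^ (2 * p))
    (by push_cast; linear_combination heq t n + a₀ t n * φ t n * I_sq)
  rw [hmass, ← im_conj_mul_D1m_D1p]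
  linarith

/-- **Discrete balance (local mass conservation) equation** for the scalar field of
the discrete Chern–Simons–Schrödinger system:
`½ ∂ₜ|φ(t,n)|² + ∇₁⁻ Im(φ̄ D₁⁺φ)(t,n) = 0`. -/
theorem discrete_CSS_balance_equation
    (h lam p : ℝ) (hh : 0 < h) (hlam : 0 < lam) (hp : 0 < p)
    (φ : ℝ → ℤ → ℂ) (a₀ a₁ a₂ : ℝ → ℤ → ℝ)
    (hdiff : ∀ n : ℤ, Differentiable ℝ (fun t => φ t n))
    (heq : ∀ (t : ℝ) (n : ℤ),
      Complex.I * (deriv (fun s => φ s n) t - Complex.I * (a₀ t n : ℂ) * φ t n)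
        + D1m h (a₁ t) (D1p h (a₁ t) (φ t)) n
        - ((a₂ t n : ℂ)) ^ 2 * φ t n
        + (lam : ℂ) * ((‖φ t n‖ ^ (2 * p) : ℝ) : ℂ) * φ t n = 0) :
    ∀ (t : ℝ) (n : ℤ),
      (1 / 2) * deriv (fun s => ‖φ s n‖ ^ 2) t
        + (1 / h) * (((starRingEnd ℂ) (φ t n) * D1p h (a₁ t) (φ t) n).im
            - ((starRingEnd ℂ) (φ t (n - 1)) * D1p h (a₁ t) (φ t) (n - 1)).im) = 0 :=
  discrete_CSS_balance_equation_general h lam p φ a₀ a₁ a₂ hdiff heq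
end

section
/- Fix h > 0, λ > 0, p > 0. Let φ : ℝ × ℤ → ℂ, a₀, a₂ : ℝ × ℤ → ℝ, a₁ : ℝ × ℤ → ℝ (a₁(t,n) representing the value at half-site n+1/2) satisfy, for all t ∈ ℝ and n ∈ ℤ, the discrete CSS system: (1) i·(∂ₜφ − i a₀ φ)(t,n) + D₁⁻D₁⁺φ(t,n) − a₂(t,n)² φ(t,n) + λ|φ(t,n)|^{2p} φ(t,n) = 0; (2) ∂ₜa₁(t,n) − (a₀(t,n+1) − a₀(t,n))/h = −a₂(t,n)|φ(t,n)|²; (3) ∂ₜa₂(t,n) = −Im( conj(φ(t,n−1)) D₁⁺φ(t,n−1) ); (4) (a₂(t,n+1) − a₂(t,n))/h = (1/2)|φ(t,n)|², where all t-derivatives exist. Let χ : ℝ × ℤ → ℝ be differentiable in t at each n. Then the gauge-transformed fields φ̃(t,n) = e^{iχ(t,n)} φ(t,n), ã₀(t,n) = a₀(t,n) + ∂ₜχ(t,n), ã₁(t,n) = a₁(t,n) + (χ(t,n+1) − χ(t,n))/h, ã₂(t,n) = a₂(t,n) satisfy the same four equations (with covariant derivatives taken with gauge ã₁). -/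
/-- Gauge-transformed scalar field `φ̃(t,n) = e^{iχ(t,n)} φ(t,n)`. -/
noncomputable def gScalar (χ : ℝ → ℤ → ℝ) (φ : ℝ → ℤ → ℂ) (t : ℝ) (n : ℤ) : ℂ :=
  Complex.exp (Complex.I * χ t n) * φ t n

/-- Gauge-transformed temporal component `ã₀(t,n) = a₀(t,n) + ∂ₜχ(t,n)`. -/
noncomputable def gA0 (χ : ℝ → ℤ → ℝ) (a₀ : ℝ → ℤ → ℝ) (t : ℝ) (n : ℤ) : ℝ :=
  a₀ t n + deriv (fun s => χ s n) t

/-- Gauge-transformed spatial component `ã₁(t,n) = a₁(t,n) + (χ(t,n+1) − χ(t,n))/h`. -/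
noncomputable def gA1 (h : ℝ) (χ : ℝ → ℤ → ℝ) (a₁ : ℝ → ℤ → ℝ) (t : ℝ) (n : ℤ) : ℝ :=
  a₁ t n + (χ t (n + 1) - χ t n) / h

/-!
Multiplying `φ` by the phase `e^{iχ}` while shifting `a₁` by the discrete gradient of `χ` makes
the covariant derivatives `D₁^±` commute with the phase, and shifting `a₀` by `∂ₜχ` absorbs the
extra term of the Leibniz rule in `∂ₜ(e^{iχ}φ)`. Equation (1) is then the original one multiplied
by `e^{iχ}`; (2) holds because the gradient of `∂ₜχ` cancels against `∂ₜ` of the gradient of `χ`;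
(3) and (4) only see `|φ|` and `conj φ · D₁⁺φ`, which are phase invariant.
-/

open Complex

section GaugeCovariance

variable {h : ℝ} (a χ : ℤ → ℝ) (n : ℤ)

lemma exp_neg_link_gauge (hh : h ≠ 0) :
    exp (-I * h * ((a n + (χ (n + 1) - χ n) / h : ℝ) : ℂ)) * exp (I * χ (n + 1))
      = exp (I * χ n) * exp (-I * h * a n) := by
  rw [← exp_add, ← exp_add]
  congr 1
  have hhc : (h : ℂ) ≠ 0 := ofReal_ne_zero.mpr hh
  push_cast
  field_simp
  ring

lemma exp_link_gauge (hh : h ≠ 0) :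
    exp (I * h * ((a n + (χ (n + 1) - χ n) / h : ℝ) : ℂ)) * exp (I * χ n)
      = exp (I * χ (n + 1)) * exp (I * h * a n) := by
  rw [← exp_add, ← exp_add]
  congr 1
  have hhc : (h : ℂ) ≠ 0 := ofReal_ne_zero.mpr hh
  push_cast
  field_simp
  ring

lemma D1p_gauge (hh : h ≠ 0) (φ : ℤ → ℂ) :
    D1p h (fun m => a m + (χ (m + 1) - χ m) / h) (fun m => exp (I * χ m) * φ m) n
      = exp (I * χ n) * D1p h a φ n := by
  unfold D1p
  rw [← mul_assoc, exp_neg_link_gauge a χ n hh]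
  ring

lemma D1m_gauge (hh : h ≠ 0) (ψ : ℤ → ℂ) :
    D1m h (fun m => a m + (χ (m + 1) - χ m) / h) (fun m => exp (I * χ m) * ψ m) n
      = exp (I * χ n) * D1m h a ψ n := by
  unfold D1m
  rw [← mul_assoc, exp_link_gauge a χ (n - 1) hh, sub_add_cancel]
  ring

end GaugeCovariance

lemma conj_mul_mul_of_norm_eq_one {u : ℂ} (hu : ‖u‖ = 1) (z w : ℂ) :
    starRingEnd ℂ (u * z) * (u * w) = starRingEnd ℂ z * w := by
  have hconj : starRingEnd ℂ u * u = 1 := by rw [conj_mul', hu]; norm_num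
  rw [map_mul]
  linear_combination (starRingEnd ℂ z * w) * hconj

section GaugeTransform

variable {h : ℝ} (χ : ℝ → ℤ → ℝ) (φ : ℝ → ℤ → ℂ) (a₁ : ℝ → ℤ → ℝ) (t : ℝ) (n : ℤ)

lemma norm_gScalar : ‖gScalar χ φ t n‖ = ‖φ t n‖ := by
  rw [gScalar, norm_mul, norm_exp_I_mul_ofReal, one_mul]

lemma D1p_gScalar (hh : h ≠ 0) :
    D1p h (gA1 h χ a₁ t) (gScalar χ φ t) n = exp (I * χ t n) * D1p h (a₁ t) (φ t) n :=
  D1p_gauge (a₁ t) (χ t) n hh (φ t)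

lemma D1m_D1p_gScalar (hh : h ≠ 0) :
    D1m h (gA1 h χ a₁ t) (D1p h (gA1 h χ a₁ t) (gScalar χ φ t)) n
      = exp (I * χ t n) * D1m h (a₁ t) (D1p h (a₁ t) (φ t)) n := by
  rw [show D1p h (gA1 h χ a₁ t) (gScalar χ φ t)
      = fun m => exp (I * χ t m) * D1p h (a₁ t) (φ t) m from
    funext fun m => D1p_gScalar χ φ a₁ t m hh]
  exact D1m_gauge (a₁ t) (χ t) n hh _

lemma hasDerivAt_gScalar (hχ : DifferentiableAt ℝ (fun s => χ s n) t)
    (hφ : DifferentiableAt ℝ (fun s => φ s n) t) :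
    HasDerivAt (fun s => gScalar χ φ s n)
      (exp (I * χ t n) * (I * (deriv (fun s => χ s n) t : ℝ)) * φ t n
        + exp (I * χ t n) * deriv (fun s => φ s n) t) t :=
  ((hχ.hasDerivAt.ofReal_comp.const_mul I).cexp).mul hφ.hasDerivAt

lemma hasDerivAt_gA1 (ha₁ : DifferentiableAt ℝ (fun s => a₁ s n) t)
    (hχ : ∀ m, DifferentiableAt ℝ (fun s => χ s m) t) :
    HasDerivAt (fun s => gA1 h χ a₁ s n)
      (deriv (fun s => a₁ s n) t
        + (deriv (fun s => χ s (n + 1)) t - deriv (fun s => χ s n) t) / h) t :=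
  ha₁.hasDerivAt.add (((hχ (n + 1)).hasDerivAt.sub (hχ n).hasDerivAt).div_const h)

end GaugeTransform

theorem discrete_CSS_gauge_invariance_general
    (h lam p : ℝ) (hh : 0 < h)
    (φ : ℝ → ℤ → ℂ) (a₀ a₁ a₂ : ℝ → ℤ → ℝ) (χ : ℝ → ℤ → ℝ)
    (hφdiff : ∀ n : ℤ, Differentiable ℝ (fun t => φ t n))
    (ha₁diff : ∀ n : ℤ, Differentiable ℝ (fun t => a₁ t n))
    (hχdiff : ∀ n : ℤ, Differentiable ℝ (fun t => χ t n))
    (heq1 : ∀ (t : ℝ) (n : ℤ),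
      Complex.I * (deriv (fun s => φ s n) t - Complex.I * (a₀ t n : ℂ) * φ t n)
        + D1m h (a₁ t) (D1p h (a₁ t) (φ t)) n
        - ((a₂ t n : ℂ)) ^ 2 * φ t n
        + (lam : ℂ) * ((‖φ t n‖ ^ (2 * p) : ℝ) : ℂ) * φ t n = 0)
    (heq2 : ∀ (t : ℝ) (n : ℤ),
      deriv (fun s => a₁ s n) t - (a₀ t (n + 1) - a₀ t n) / h
        = -(a₂ t n) * ‖φ t n‖ ^ 2)
    (heq3 : ∀ (t : ℝ) (n : ℤ),
      deriv (fun s => a₂ s n) t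
        = -((starRingEnd ℂ) (φ t (n - 1)) * D1p h (a₁ t) (φ t) (n - 1)).im)
    (heq4 : ∀ (t : ℝ) (n : ℤ),
      (a₂ t (n + 1) - a₂ t n) / h = (1 / 2) * ‖φ t n‖ ^ 2) :
    (∀ (t : ℝ) (n : ℤ),
      Complex.I * (deriv (fun s => gScalar χ φ s n) t
          - Complex.I * (gA0 χ a₀ t n : ℂ) * gScalar χ φ t n)
        + D1m h (gA1 h χ a₁ t) (D1p h (gA1 h χ a₁ t) (gScalar χ φ t)) n
        - ((a₂ t n : ℂ)) ^ 2 * gScalar χ φ t n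
        + (lam : ℂ) * ((‖gScalar χ φ t n‖ ^ (2 * p) : ℝ) : ℂ)
            * gScalar χ φ t n = 0)
    ∧ (∀ (t : ℝ) (n : ℤ),
      deriv (fun s => gA1 h χ a₁ s n) t - (gA0 χ a₀ t (n + 1) - gA0 χ a₀ t n) / h
        = -(a₂ t n) * ‖gScalar χ φ t n‖ ^ 2)
    ∧ (∀ (t : ℝ) (n : ℤ),
      deriv (fun s => a₂ s n) t
        = -((starRingEnd ℂ) (gScalar χ φ t (n - 1))
            * D1p h (gA1 h χ a₁ t) (gScalar χ φ t) (n - 1)).im)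
    ∧ (∀ (t : ℝ) (n : ℤ),
      (a₂ t (n + 1) - a₂ t n) / h = (1 / 2) * ‖gScalar χ φ t n‖ ^ 2) := by
  have hne : h ≠ 0 := hh.ne'
  refine ⟨fun t n => ?_, fun t n => ?_, fun t n => ?_, fun t n => ?_⟩
  · rw [(hasDerivAt_gScalar χ φ t n (hχdiff n t) (hφdiff n t)).deriv,
      D1m_D1p_gScalar χ φ a₁ t n hne, norm_gScalar]
    simp only [gScalar, gA0]
    push_cast
    linear_combination exp (I * χ t n) * heq1 t n
  · rw [(hasDerivAt_gA1 χ a₁ t n (ha₁diff n t) (fun m => hχdiff m t)).deriv, norm_gScalar]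
    simp only [gA0]
    linear_combination heq2 t n
  · rw [D1p_gScalar χ φ a₁ t (n - 1) hne, gScalar,
      conj_mul_mul_of_norm_eq_one (norm_exp_I_mul_ofReal _)]
    exact heq3 t n
  · rw [norm_gScalar]
    exact heq4 t n

/-- **Gauge invariance of the discrete Chern–Simons–Schrödinger system**: the
gauge-transformed fields `(φ̃, ã₀, ã₁, ã₂ = a₂)` generated by any function `χ`
differentiable in time satisfy the same four equations. -/
theorem discrete_CSS_gauge_invariance
    (h lam p : ℝ) (hh : 0 < h) (hlam : 0 < lam) (hp : 0 < p)
    (φ : ℝ → ℤ → ℂ) (a₀ a₁ a₂ : ℝ → ℤ → ℝ) (χ : ℝ → ℤ → ℝ)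
    (hφdiff : ∀ n : ℤ, Differentiable ℝ (fun t => φ t n))
    (ha₁diff : ∀ n : ℤ, Differentiable ℝ (fun t => a₁ t n))
    (ha₂diff : ∀ n : ℤ, Differentiable ℝ (fun t => a₂ t n))
    (hχdiff : ∀ n : ℤ, Differentiable ℝ (fun t => χ t n))
    (heq1 : ∀ (t : ℝ) (n : ℤ),
      Complex.I * (deriv (fun s => φ s n) t - Complex.I * (a₀ t n : ℂ) * φ t n)
        + D1m h (a₁ t) (D1p h (a₁ t) (φ t)) n
        - ((a₂ t n : ℂ)) ^ 2 * φ t n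
        + (lam : ℂ) * ((‖φ t n‖ ^ (2 * p) : ℝ) : ℂ) * φ t n = 0)
    (heq2 : ∀ (t : ℝ) (n : ℤ),
      deriv (fun s => a₁ s n) t - (a₀ t (n + 1) - a₀ t n) / h
        = -(a₂ t n) * ‖φ t n‖ ^ 2)
    (heq3 : ∀ (t : ℝ) (n : ℤ),
      deriv (fun s => a₂ s n) t
        = -((starRingEnd ℂ) (φ t (n - 1)) * D1p h (a₁ t) (φ t) (n - 1)).im)
    (heq4 : ∀ (t : ℝ) (n : ℤ),
      (a₂ t (n + 1) - a₂ t n) / h = (1 / 2) * ‖φ t n‖ ^ 2) :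
    (∀ (t : ℝ) (n : ℤ),
      Complex.I * (deriv (fun s => gScalar χ φ s n) t
          - Complex.I * (gA0 χ a₀ t n : ℂ) * gScalar χ φ t n)
        + D1m h (gA1 h χ a₁ t) (D1p h (gA1 h χ a₁ t) (gScalar χ φ t)) n
        - ((a₂ t n : ℂ)) ^ 2 * gScalar χ φ t n
        + (lam : ℂ) * ((‖gScalar χ φ t n‖ ^ (2 * p) : ℝ) : ℂ)
            * gScalar χ φ t n = 0)
    ∧ (∀ (t : ℝ) (n : ℤ),
      deriv (fun s => gA1 h χ a₁ s n) t - (gA0 χ a₀ t (n + 1) - gA0 χ a₀ t n) / h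
        = -(a₂ t n) * ‖gScalar χ φ t n‖ ^ 2)
    ∧ (∀ (t : ℝ) (n : ℤ),
      deriv (fun s => a₂ s n) t
        = -((starRingEnd ℂ) (gScalar χ φ t (n - 1))
            * D1p h (gA1 h χ a₁ t) (gScalar χ φ t) (n - 1)).im)
    ∧ (∀ (t : ℝ) (n : ℤ),
      (a₂ t (n + 1) - a₂ t n) / h = (1 / 2) * ‖gScalar χ φ t n‖ ^ 2) :=
  discrete_CSS_gauge_invariance_general h lam p hh φ a₀ a₁ a₂ χ hφdiff ha₁diff hχdiff heq1 heq2 heq3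
    heq4
end

section
/- Fix h > 0. Let φ : ℤ → ℂ and A₀, A₂ : ℤ → ℝ satisfy, for all n ∈ ℤ, (A₀(n+1) − A₀(n))/h = A₂(n)|φ(n)|² and (A₂(n+1) − A₂(n))/h = (1/2)|φ(n)|². Then the function g(n) = A₀(n) − A₂(n)² satisfies, for all n ∈ ℤ, (g(n+1) − g(n))/h = −(h/4)|φ(n)|⁴. -/
/-! Expanding `A₂(n+1)² − A₂(n)² = 2A₂(n)·δ + δ²` with `δ = (h/2)|φ(n)|²`, the cross term
`2A₂(n)·δ = h A₂(n)|φ(n)|²` is exactly the increment of `A₀`, so only `−δ²` survives. -/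

theorem diffQuotient_sub_sq_eq {K : Type*} [Field K] {h a₀ a₁ b₀ b₁ t : K}
    (ha : (a₁ - a₀) / h = 2 * b₀ * t) (hb : (b₁ - b₀) / h = t) :
    ((a₁ - b₁ ^ 2) - (a₀ - b₀ ^ 2)) / h = -h * t ^ 2 := by
  rcases eq_or_ne h 0 with rfl | hh
  · simp
  rw [div_eq_iff hh] at ha hb ⊢
  linear_combination ha - (b₁ + b₀ + t * h) * hb

theorem discrete_CSS_gauge_reduction_general
    (h : ℝ) (φ : ℤ → ℂ) (A₀ A₂ : ℤ → ℝ)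
    (h0 : ∀ n : ℤ, (A₀ (n + 1) - A₀ n) / h = A₂ n * ‖φ n‖ ^ 2)
    (h2 : ∀ n : ℤ, (A₂ (n + 1) - A₂ n) / h = (1 / 2) * ‖φ n‖ ^ 2) :
    ∀ n : ℤ, ((A₀ (n + 1) - A₂ (n + 1) ^ 2) - (A₀ n - A₂ n ^ 2)) / h
      = -(h / 4) * ‖φ n‖ ^ 4 := by
  intro n
  have hA₀ : (A₀ (n + 1) - A₀ n) / h = 2 * A₂ n * (1 / 2 * ‖φ n‖ ^ 2) := by rw [h0 n]; ring
  rw [diffQuotient_sub_sq_eq hA₀ (h2 n)]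
  ring

/-- **Reduction of the gauge constraints**: if `∇₁⁺A₀ = A₂|φ|²` and `∇₁⁺A₂ = ½|φ|²`
on the lattice of spacing `h`, then `g = A₀ − A₂²` satisfies `∇₁⁺g = −(h/4)|φ|⁴`. -/
theorem discrete_CSS_gauge_reduction
    (h : ℝ) (hh : 0 < h) (φ : ℤ → ℂ) (A₀ A₂ : ℤ → ℝ)
    (h0 : ∀ n : ℤ, (A₀ (n + 1) - A₀ n) / h = A₂ n * ‖φ n‖ ^ 2)
    (h2 : ∀ n : ℤ, (A₂ (n + 1) - A₂ n) / h = (1 / 2) * ‖φ n‖ ^ 2) :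
    ∀ n : ℤ, ((A₀ (n + 1) - A₂ (n + 1) ^ 2) - (A₀ n - A₂ n ^ 2)) / h
      = -(h / 4) * ‖φ n‖ ^ 4 :=
  discrete_CSS_gauge_reduction_general h φ A₀ A₂ h0 h2
end

section
/- Fix λ > 0, Ω > 0, p > 0 and C > 0. Let Q : ℝ → ℝ be defined by Q(x) = (Ω(p+1)/λ)^{1/(2p)}·sech^{1/p}(√Ω·p·x). Then there exists h₀ > 0 such that for every h ∈ (0, h₀) there is no real sequence U ∈ ℓ¹(ℤ) with U_{−n} = U_n for all n ∈ ℤ satisfying both: (i) for all n ∈ ℤ, (1/h²)(U_{n+1} − 2U_n + U_{n−1}) − Ω U_n + ( (h²/4)·Σ_{k=n}^{∞} U_k⁴ )·U_n + λ |U_n|^{2p} U_n = 0; and (ii) Σ_{n∈ℤ} |U_n − Q(hn)| ≤ C·h. -/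
/-- The continuous NLS solitary-wave profile
`Q(x) = (Ω(p+1)/λ)^{1/(2p)} sech^{1/p}(√Ω p x)`. -/
noncomputable def solitonQ (lam Ω p : ℝ) (x : ℝ) : ℝ :=
  (Ω * (p + 1) / lam) ^ (1 / (2 * p))
    * (1 / Real.cosh (Real.sqrt Ω * p * x)) ^ (1 / p)

/-- Summability of `exp (-c|n|)` over `ℤ`. -/
lemma summable_exp_neg_abs_int {c : ℝ} (hc : 0 < c) :
    Summable (fun n : ℤ => Real.exp (-(c * |(n : ℝ)|))) := by
  have hgeo : Summable (fun n : ℕ => Real.exp (-c) ^ n) :=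
    summable_geometric_of_lt_one (Real.exp_nonneg _)
      (Real.exp_lt_one_iff.mpr (by linarith))
  have key : ∀ n : ℕ, Real.exp (-(c * (n : ℝ))) = Real.exp (-c) ^ n := by
    intro n
    rw [← Real.exp_nat_mul]
    ring_nf
  apply Summable.of_nat_of_neg
  · refine hgeo.congr fun n => ?_
    simp only [Int.cast_natCast, abs_of_nonneg (Nat.cast_nonneg n : (0:ℝ) ≤ n)]
    exact (key n).symm
  · refine hgeo.congr fun n => ?_
    push_cast
    rw [abs_neg, abs_of_nonneg (Nat.cast_nonneg n : (0:ℝ) ≤ n)]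
    exact (key n).symm

/-- The discretized soliton profile is summable over `ℤ`. -/
lemma summable_solitonQ (lam Ω p : ℝ) (hlam : 0 < lam) (hΩ : 0 < Ω) (hp : 0 < p)
    {h : ℝ} (hh : 0 < h) :
    Summable (fun n : ℤ => solitonQ lam Ω p (h * n)) := by
  set A : ℝ := (Ω * (p + 1) / lam) ^ (1 / (2 * p)) with hA
  have hA0 : 0 < A := Real.rpow_pos_of_pos (by positivity) _
  set b : ℝ := Real.sqrt Ω * p * h with hb
  have hb0 : 0 < b := by
    have : 0 < Real.sqrt Ω := Real.sqrt_pos.mpr hΩ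
    positivity
  -- comparison function
  have hcmp : Summable (fun n : ℤ => A * ((2 : ℝ) ^ (1/p) * Real.exp (-(b/p * |(n : ℝ)|)))) :=
    ((summable_exp_neg_abs_int (by positivity : (0:ℝ) < b/p)).mul_left _).mul_left _
  refine Summable.of_nonneg_of_le (fun n => ?_) (fun n => ?_) hcmp
  · have := Real.cosh_pos (Real.sqrt Ω * p * (h * n))
    unfold solitonQ
    positivity
  · unfold solitonQ
    rw [← hA]
    have harg : Real.sqrt Ω * p * (h * (n:ℝ)) = b * n := by rw [hb]; ring
    rw [harg]
    refine mul_le_mul_of_nonneg_left ?_ hA0.le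
    have hcosh : Real.exp (b * |(n:ℝ)|) / 2 ≤ Real.cosh (b * n) := by
      rw [← Real.cosh_abs, Real.cosh_eq, abs_mul, abs_of_nonneg hb0.le]
      have := Real.exp_pos (-(b * |(n:ℝ)|))
      linarith
    have hsech : 1 / Real.cosh (b * n) ≤ 2 * Real.exp (-(b * |(n:ℝ)|)) := by
      rw [div_le_iff₀ (Real.cosh_pos _)]
      have hep : 0 < Real.exp (b * |(n:ℝ)|) := Real.exp_pos _
      calc (1:ℝ) = 2 * Real.exp (-(b * |(n:ℝ)|)) * (Real.exp (b * |(n:ℝ)|) / 2) := by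
            rw [Real.exp_neg]; field_simp
        _ ≤ 2 * Real.exp (-(b * |(n:ℝ)|)) * Real.cosh (b * n) := by
            refine mul_le_mul_of_nonneg_left hcosh (by positivity)
    calc (1 / Real.cosh (b * n)) ^ (1/p)
        ≤ (2 * Real.exp (-(b * |(n:ℝ)|))) ^ (1/p) := by
          apply Real.rpow_le_rpow (by positivity) hsech (by positivity)
      _ = (2:ℝ) ^ (1/p) * Real.exp (-(b/p * |(n : ℝ)|)) := by
          rw [Real.mul_rpow (by norm_num) (Real.exp_nonneg _), ← Real.exp_mul]
          ring_nf

/-- **Nonexistence of symmetric stationary bound states near the continuum limit**: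
for sufficiently small lattice spacing `h` there is no symmetric `ℓ¹` solution of the
stationary discrete Chern–Simons–Schrödinger system that is `O(h)`-close in `ℓ¹`
to the continuum NLS soliton `Q`. -/
theorem nonexistence_near_continuum_limit
    (lam Ω p C : ℝ) (hlam : 0 < lam) (hΩ : 0 < Ω) (hp : 0 < p) (hC : 0 < C) :
    ∃ h₀ > (0 : ℝ), ∀ h : ℝ, 0 < h → h < h₀ →
      ¬ ∃ U : ℤ → ℝ,
          Summable (fun n => |U n|)
          ∧ (∀ n : ℤ, U (-n) = U n)
          ∧ (∀ n : ℤ,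
              (1 / h ^ 2) * (U (n + 1) - 2 * U n + U (n - 1)) - Ω * U n
                + (h ^ 2 / 4 * ∑' k : ℤ, (if n ≤ k then (U k) ^ 4 else 0)) * U n
                + lam * |U n| ^ (2 * p) * U n = 0)
          ∧ (∑' n : ℤ, |U n - solitonQ lam Ω p (h * n)|) ≤ C * h := by
  set A : ℝ := (Ω * (p + 1) / lam) ^ (1 / (2 * p)) with hA
  have hA0 : 0 < A := Real.rpow_pos_of_pos (by positivity) _
  refine ⟨A / C, by positivity, fun h hh hlt ⟨U, hsum, hsym, heq, hclose⟩ => ?_⟩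
  have hh2 : (0:ℝ) < h ^ 2 / 4 := by positivity
  -- bound on |U k|
  set T : ℝ := ∑' n, |U n| with hT
  have hTle : ∀ k, |U k| ≤ T := fun k => Summable.le_tsum hsum k (fun j _ => abs_nonneg _)
  have hT0 : 0 ≤ T := (abs_nonneg _).trans (hTle 0)
  -- summability of U^4
  have hsum4 : Summable (fun k : ℤ => (U k) ^ 4) := by
    refine Summable.of_nonneg_of_le (fun k => by positivity) (fun k => ?_)
      (hsum.mul_left (T ^ 3))
    have h4 : (U k) ^ 4 = |U k| ^ 4 := by
      rw [pow_abs, abs_of_nonneg (by positivity : (0:ℝ) ≤ U k ^ 4)]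
    calc (U k) ^ 4 = |U k| ^ 3 * |U k| := by rw [h4, ← pow_succ]
      _ ≤ T ^ 3 * |U k| :=
          mul_le_mul_of_nonneg_right (pow_le_pow_left₀ (abs_nonneg _) (hTle k) 3) (abs_nonneg _)
  have hS : ∀ m : ℤ, Summable (fun k : ℤ => if m ≤ k then (U k) ^ 4 else 0) := by
    intro m
    refine Summable.of_nonneg_of_le (fun k => ?_) (fun k => ?_) hsum4
    · split <;> positivity
    · split
      · exact le_rfl
      · positivity
  -- U vanishes away from the origin
  have hzero : ∀ n : ℤ, 1 ≤ n → U n = 0 := by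
    intro n hn
    by_contra hne
    have e1 := heq n
    have e2 := heq (-n)
    have r1 : U (-n + 1) = U (n - 1) := by
      rw [show (-n + 1 : ℤ) = -(n - 1) by ring]; exact hsym _
    have r2 : U (-n - 1) = U (n + 1) := by
      rw [show (-n - 1 : ℤ) = -(n + 1) by ring]; exact hsym _
    have r3 : U (-n) = U n := hsym n
    rw [r1, r2, r3] at e2
    set Sn : ℝ := ∑' k : ℤ, (if n ≤ k then (U k) ^ 4 else 0) with hSn
    set Sm : ℝ := ∑' k : ℤ, (if -n ≤ k then (U k) ^ 4 else 0) with hSm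
    have key0 : h ^ 2 / 4 * ((Sn - Sm) * U n) = 0 := by linear_combination e1 - e2
    have key : (Sn - Sm) * U n = 0 :=
      (mul_eq_zero.mp key0).resolve_left (ne_of_gt hh2)
    -- compute the difference of the two tails
    have hdiff : Sm - Sn = ∑' k : ℤ,
        ((if -n ≤ k then (U k) ^ 4 else 0) - (if n ≤ k then (U k) ^ 4 else 0)) :=
      (Summable.tsum_sub (hS (-n)) (hS n)).symm
    have hgsum : Summable (fun k : ℤ =>
        (if -n ≤ k then (U k) ^ 4 else 0) - (if n ≤ k then (U k) ^ 4 else 0)) :=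
      (hS (-n)).sub (hS n)
    have hgnonneg : ∀ k : ℤ, 0 ≤
        (if -n ≤ k then (U k) ^ 4 else 0) - (if n ≤ k then (U k) ^ 4 else 0) := by
      intro k
      split_ifs with h1 h2
      · simp
      · rw [sub_zero]; positivity
      · omega
      · simp
    have hterm : (if -n ≤ (-n : ℤ) then (U (-n)) ^ 4 else 0)
        - (if n ≤ (-n : ℤ) then (U (-n)) ^ 4 else 0) = (U n) ^ 4 := by
      rw [if_pos le_rfl, if_neg (by omega), r3, sub_zero]
    have hle : (U n) ^ 4 ≤ Sm - Sn := by
      rw [hdiff, ← hterm]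
      exact Summable.le_tsum hgsum (-n) (fun j _ => hgnonneg j)
    have hpos : 0 < (U n) ^ 4 :=
      lt_of_le_of_ne (by positivity) (Ne.symm (pow_ne_zero 4 hne))
    rcases mul_eq_zero.mp key with hk | hk
    · nlinarith
    · exact hne hk
  have hall : ∀ n : ℤ, n ≠ 0 → U n = 0 := by
    intro n hn
    rcases le_or_gt 1 n with h1 | h1
    · exact hzero n h1
    · rw [← hsym n]
      exact hzero (-n) (by omega)
  -- U 0 = 0 from the equation at n = 1
  have hU1 : U 1 = 0 := hzero 1 le_rfl
  have hU2 : U (1 + 1) = 0 := hall (1 + 1) (by norm_num)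
  have hU0 : U 0 = 0 := by
    have e := heq 1
    rw [hU1, hU2, show (1 - 1 : ℤ) = 0 by norm_num] at e
    simp only [mul_zero, zero_sub, sub_zero, add_zero, zero_add, neg_zero] at e
    have h2 : (0:ℝ) < h ^ 2 := by positivity
    rcases mul_eq_zero.mp e with hk | hk
    · exact absurd hk (by positivity)
    · linarith [hk]
  -- everything vanishes, contradicting closeness to the soliton
  have hQsum : Summable (fun n : ℤ => solitonQ lam Ω p (h * n)) :=
    summable_solitonQ lam Ω p hlam hΩ hp hh
  have hQnonneg : ∀ n : ℤ, 0 ≤ solitonQ lam Ω p (h * n) := by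
    intro n
    have := Real.cosh_pos (Real.sqrt Ω * p * (h * n))
    unfold solitonQ
    positivity
  have hUQ : Summable (fun n : ℤ => |U n - solitonQ lam Ω p (h * n)|) := by
    refine Summable.of_nonneg_of_le (fun n => abs_nonneg _) (fun n => ?_) (hsum.add hQsum)
    calc |U n - solitonQ lam Ω p (h * n)| ≤ |U n| + |solitonQ lam Ω p (h * n)| := abs_sub _ _
      _ = |U n| + solitonQ lam Ω p (h * n) := by rw [abs_of_nonneg (hQnonneg n)]
  have hterm0 : |U 0 - solitonQ lam Ω p (h * ((0 : ℤ) : ℝ))| = A := by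
    have : solitonQ lam Ω p (h * ((0 : ℤ) : ℝ)) = A := by
      unfold solitonQ
      rw [hA]
      norm_num
    rw [hU0, this, zero_sub, abs_neg, abs_of_nonneg hA0.le]
  have hge : A ≤ C * h := by
    rw [← hterm0]
    exact le_trans (Summable.le_tsum hUQ 0 (fun j _ => abs_nonneg _)) hclose
  have : C * h < A := by
    calc C * h < C * (A / C) := by exact mul_lt_mul_of_pos_left hlt hC
      _ = A := by field_simp
  linarith
end

section
/- Fix λ > 0, Ω > 0, p > 0 and let Q : ℝ → ℝ be defined by Q(x) = (Ω(p+1)/λ)^{1/(2p)}·sech^{1/p}(√Ω·p·x). Then there exist constants C > 0 and h₀ > 0 such that for every h ∈ (0, h₀), | h·Σ_{n∈ℤ} Q(hn)⁵·Q(h(n+1)) − ∫_ℝ Q(x)⁶ dx | ≤ C·h. -/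
open Real MeasureTheory Set
open scoped NNReal

theorem integrable_exp_neg_mul_abs {c : ℝ} (hc : 0 < c) :
    Integrable fun x : ℝ => exp (-(c * |x|)) := by
  have hIoi : IntegrableOn (fun x : ℝ => exp (-(c * |x|))) (Ioi 0) :=
    (exp_neg_integrableOn_Ioi 0 hc).congr_fun
      (fun x hx => by simp [abs_of_pos (mem_Ioi.1 hx)]) measurableSet_Ioi
  have hIic : IntegrableOn (fun x : ℝ => exp (-(c * |x|))) (Iic 0) := by
    rw [← (Measure.measurePreserving_neg volume).integrableOn_comp_preimage
      (Homeomorph.neg ℝ).measurableEmbedding]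
    simpa [Function.comp_def, integrableOn_Ici_iff_integrableOn_Ioi] using hIoi
  rw [← integrableOn_univ, ← Iic_union_Ioi (a := (0 : ℝ))]
  exact hIic.union hIoi

theorem abs_mul_tsum_sub_integral_le {g E : ℝ → ℝ} {a : ℤ → ℝ} {h : ℝ} (hh : 0 < h)
    (hg : Integrable g) (hE : Integrable E)
    (hbound : ∀ n : ℤ, ∀ x ∈ Ioc (h * n) (h * (n + 1)), |a n - g x| ≤ E x) :
    |h * ∑' n, a n - ∫ x, g x| ≤ ∫ x, E x := by
  set s : ℤ → Set ℝ := fun n => Ioc (h * n) (h * (n + 1))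
  have hs_union : ⋃ n, s n = univ := by
    simpa [s, zsmul_eq_mul, mul_comm h] using iUnion_Ioc_zsmul hh
  have hs_disj : Pairwise (Function.onFun Disjoint s) := by
    simpa [s, zsmul_eq_mul, mul_comm h] using pairwise_disjoint_Ioc_add_zsmul (0 : ℝ) h
  have hasSum_cells {F : ℝ → ℝ} (hF : Integrable F) :
      HasSum (fun n => ∫ x in s n, F x) (∫ x, F x) := by
    have := hasSum_integral_iUnion (fun n => measurableSet_Ioc) hs_disj
      (by rw [hs_union]; exact hF.integrableOn)
    rwa [hs_union, setIntegral_univ] at this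
  have hcell (n : ℤ) : ‖h * a n - ∫ x in s n, g x‖ ≤ ∫ x in s n, E x := by
    have hvol : volume (s n) = ENNReal.ofReal h := by
      rw [Real.volume_Ioc]; ring_nf
    have hconst : h * a n = ∫ _ in s n, a n := by
      rw [setIntegral_const, measureReal_def, hvol, ENNReal.toReal_ofReal hh.le, smul_eq_mul]
    have hconst_int : IntegrableOn (fun _ => a n) (s n) :=
      integrableOn_const (by rw [hvol]; exact ENNReal.ofReal_ne_top)
    rw [hconst, ← integral_sub hconst_int hg.integrableOn]
    exact norm_integral_le_of_norm_le hE.integrableOn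
      ((ae_restrict_iff' measurableSet_Ioc).2 (Filter.Eventually.of_forall (hbound n)))
  have hdiff : Summable fun n => h * a n - ∫ x in s n, g x :=
    .of_norm_bounded (hasSum_cells hE).summable hcell
  have hsplit : h * ∑' n, a n - ∫ x, g x = ∑' n, (h * a n - ∫ x in s n, g x) := by
    rw [← tsum_mul_left, (by simpa using hdiff.hasSum.add (hasSum_cells hg) :
      HasSum (fun n => h * a n) _).tsum_eq, add_sub_cancel_right]
  rw [hsplit]
  exact tsum_of_norm_bounded (hasSum_cells hE) hcell

theorem exp_neg_mul_abs_le_of_abs_sub_le_one {c x y : ℝ} (hc : 0 ≤ c) (hxy : |x - y| ≤ 1) :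
    exp (-(c * |y|)) ≤ exp c * exp (-(c * |x|)) := by
  rw [← exp_add, exp_le_exp]
  have : |x| ≤ |y| + 1 := by linarith [abs_sub_abs_le_abs_sub x y]
  nlinarith

theorem mul_exp_neg_pow_le {M t : ℝ} {k : ℕ} (hM : 0 ≤ M) (ht : 0 ≤ t) (hk : k ≠ 0) :
    (M * exp (-t)) ^ k ≤ M ^ k * exp (-t) := by
  rw [mul_pow]
  gcongr
  exact pow_le_of_le_one (exp_pos _).le (exp_le_one_iff.2 (neg_nonpos.2 ht)) hk

theorem abs_pow_mul_sub_pow_succ_le {u v w m δ : ℝ} (k : ℕ) (hu : |u| ≤ m) (hw : |w| ≤ m)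
    (huw : |u - w| ≤ δ) (hvw : |v - w| ≤ δ) :
    |u ^ k * v - w ^ (k + 1)| ≤ (k + 1) * m ^ k * δ := by
  rcases k with _ | k
  · simpa using hvw
  have hm : 0 ≤ m := (abs_nonneg u).trans hu
  have hδ : 0 ≤ δ := (abs_nonneg _).trans huw
  have hpow : |u ^ (k + 1) - w ^ (k + 1)| ≤ δ * (k + 1) * m ^ k := by
    calc |u ^ (k + 1) - w ^ (k + 1)| ≤ |u - w| * (k + 1 : ℕ) * max |u| |w| ^ k :=
          abs_pow_sub_pow_le ..
      _ ≤ δ * (k + 1) * m ^ k := by push_cast; gcongr; exact max_le hu hw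
  calc |u ^ (k + 1) * v - w ^ (k + 1 + 1)|
      = |u ^ (k + 1) * (v - w) + (u ^ (k + 1) - w ^ (k + 1)) * w| := by ring_nf
    _ ≤ |u| ^ (k + 1) * |v - w| + |u ^ (k + 1) - w ^ (k + 1)| * |w| := by
        rw [← abs_pow, ← abs_mul, ← abs_mul]; exact abs_add_le _ _
    _ ≤ m ^ (k + 1) * δ + δ * (k + 1) * m ^ k * m := by gcongr
    _ = ((k + 1 : ℕ) + 1) * m ^ (k + 1) * δ := by push_cast; ring

theorem abs_mul_tsum_pow_mul_sub_integral_pow_succ_le {f : ℝ → ℝ} {B c h : ℝ} {K : ℝ≥0} {k : ℕ}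
    (hk : k ≠ 0) (hc : 0 < c) (hdecay : ∀ x, |f x| ≤ B * exp (-(c * |x|)))
    (hf : LipschitzWith K f) (hh₀ : 0 < h) (hh₁ : h ≤ 1) :
    |h * ∑' n : ℤ, f (h * n) ^ k * f (h * (n + 1)) - ∫ x, f x ^ (k + 1)|
      ≤ (k + 1) * (B * exp c) ^ k * K * (∫ x, exp (-(c * |x|))) * h := by
  have hB : 0 ≤ B := nonneg_of_mul_nonneg_left ((abs_nonneg _).trans (hdecay 0)) (exp_pos _)
  have hexp := integrable_exp_neg_mul_abs hc
  have hg : Integrable fun x => f x ^ (k + 1) := by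
    refine (hexp.const_mul (B ^ (k + 1))).mono' (hf.continuous.pow _).aestronglyMeasurable
      (Filter.Eventually.of_forall fun x => ?_)
    rw [norm_eq_abs, abs_pow]
    calc |f x| ^ (k + 1) ≤ (B * exp (-(c * |x|))) ^ (k + 1) := by gcongr; exact hdecay x
      _ ≤ _ := mul_exp_neg_pow_le hB (by positivity) k.succ_ne_zero
  refine (abs_mul_tsum_sub_integral_le hh₀ hg
    (hexp.const_mul ((k + 1) * (B * exp c) ^ k * K * h)) fun n x hx => ?_).trans_eq
    (by rw [integral_const_mul]; ring)
  have hclose {y : ℝ} (hxy : |x - y| ≤ h) : |f y - f x| ≤ K * h := by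
    calc |f y - f x| ≤ K * |y - x| := by simpa only [dist_eq] using hf.dist_le_mul y x
      _ ≤ K * h := by rw [abs_sub_comm]; gcongr
  have henv {y : ℝ} (hxy : |x - y| ≤ h) : |f y| ≤ B * exp c * exp (-(c * |x|)) := by
    rw [mul_assoc]
    refine (hdecay y).trans ?_
    gcongr
    exact exp_neg_mul_abs_le_of_abs_sub_le_one hc.le (hxy.trans hh₁)
  have hleft : |x - h * n| ≤ h := by
    rw [abs_le]; constructor <;> linarith [hx.1, hx.2]
  have hright : |x - h * (n + 1)| ≤ h := by
    rw [abs_le]; constructor <;> linarith [hx.1, hx.2]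
  have hself : |x - x| ≤ h := by simpa using hh₀.le
  calc |f (h * n) ^ k * f (h * (n + 1)) - f x ^ (k + 1)|
      ≤ (k + 1) * (B * exp c * exp (-(c * |x|))) ^ k * (K * h) :=
        abs_pow_mul_sub_pow_succ_le k (henv hleft) (henv hself) (hclose hleft) (hclose hright)
    _ ≤ (k + 1) * ((B * exp c) ^ k * exp (-(c * |x|))) * (K * h) := by
        gcongr
        exact mul_exp_neg_pow_le (by positivity) (by positivity) hk
    _ = _ := by ring

theorem one_div_cosh_le_two_mul_exp (x : ℝ) : 1 / cosh x ≤ 2 * exp (-|x|) := by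
  have h := exp_abs_le x
  rw [div_le_iff₀ (cosh_pos x), cosh_eq, exp_neg]
  have := exp_pos |x|
  field_simp
  linarith

theorem one_div_cosh_rpow_le_exp {s : ℝ} (hs : 0 ≤ s) (x : ℝ) :
    (1 / cosh x) ^ s ≤ 2 ^ s * exp (-(s * |x|)) := by
  calc (1 / cosh x) ^ s ≤ (2 * exp (-|x|)) ^ s := by
        gcongr
        exact one_div_cosh_le_two_mul_exp x
    _ = 2 ^ s * exp (-(s * |x|)) := by
        rw [mul_rpow zero_le_two (exp_pos _).le, ← exp_mul]
        ring_nf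

theorem hasDerivAt_one_div_cosh_rpow (s x : ℝ) :
    HasDerivAt (fun x => (1 / cosh x) ^ s) (-s * tanh x * (1 / cosh x) ^ s) x := by
  have hc := (cosh_pos x).ne'
  convert ((hasDerivAt_cosh x).inv hc).rpow_const (p := s) (Or.inl (by simpa using hc)) using 1
  · ext y; simp
  · rw [Pi.inv_apply, one_div, rpow_sub_one (inv_ne_zero hc), tanh_eq_sinh_div_cosh]
    field_simp

theorem lipschitzWith_one_div_cosh_rpow {s : ℝ} (hs : 0 ≤ s) :
    LipschitzWith s.toNNReal fun x => (1 / cosh x) ^ s := by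
  refine lipschitzWith_of_nnnorm_deriv_le
    (fun x => (hasDerivAt_one_div_cosh_rpow s x).differentiableAt) fun x => ?_
  rw [(hasDerivAt_one_div_cosh_rpow s x).deriv, ← NNReal.coe_le_coe, coe_nnnorm,
    Real.coe_toNNReal _ hs, norm_eq_abs, abs_mul, abs_mul, abs_neg, abs_of_nonneg hs,
    abs_of_nonneg (rpow_nonneg (one_div_nonneg.2 (cosh_pos x).le) _)]
  have h1 : (1 / cosh x) ^ s ≤ 1 :=
    rpow_le_one (one_div_nonneg.2 (cosh_pos x).le) ((div_le_one (cosh_pos x)).2 (one_le_cosh x)) hs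
  calc s * |tanh x| * (1 / cosh x) ^ s ≤ s * 1 * 1 := by
        gcongr; exact (abs_tanh_lt_one x).le
    _ = s := by ring

theorem abs_solitonQ_le {lam Ω p : ℝ} (hp : 0 < p) (x : ℝ) :
    |solitonQ lam Ω p x|
      ≤ |(Ω * (p + 1) / lam) ^ (1 / (2 * p))| * 2 ^ (1 / p) * exp (-(sqrt Ω * |x|)) := by
  have hs : 0 ≤ 1 / p := by positivity
  rw [solitonQ, abs_mul,
    abs_of_nonneg (rpow_nonneg (one_div_nonneg.2 (cosh_pos (sqrt Ω * p * x)).le) _),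
    mul_assoc _ (2 ^ (1 / p))]
  gcongr
  have hc : 1 / p * |sqrt Ω * p * x| = sqrt Ω * |x| := by
    rw [abs_mul, abs_of_nonneg (by positivity : 0 ≤ sqrt Ω * p)]
    field_simp
  simpa only [hc] using one_div_cosh_rpow_le_exp hs (sqrt Ω * p * x)

theorem lipschitzWith_solitonQ {lam Ω p : ℝ} (hp : 0 < p) :
    LipschitzWith (‖(Ω * (p + 1) / lam) ^ (1 / (2 * p))‖₊ * ((1 / p).toNNReal * ‖sqrt Ω * p‖₊))
      (solitonQ lam Ω p) :=
  (lipschitzWith_smul _).comp ((lipschitzWith_one_div_cosh_rpow (by positivity)).comp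
    (lipschitzWith_smul _))

/-- **Riemann-sum estimate**: for small `h`,
`|h Σₙ Q(hn)⁵ Q(h(n+1)) − ∫_ℝ Q⁶| ≤ C h`. -/
theorem soliton_riemann_sum_estimate
    (lam Ω p : ℝ) (hlam : 0 < lam) (hΩ : 0 < Ω) (hp : 0 < p) :
    ∃ C > (0 : ℝ), ∃ h₀ > (0 : ℝ), ∀ h : ℝ, 0 < h → h < h₀ →
      |h * ∑' n : ℤ, solitonQ lam Ω p (h * n) ^ 5 * solitonQ lam Ω p (h * (n + 1))
          - ∫ x : ℝ, solitonQ lam Ω p x ^ 6|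
        ≤ C * h := by
  have hc : 0 < sqrt Ω := sqrt_pos.2 hΩ
  -- `C` is read off from the general estimate; only `0 < C` is left.
  refine ⟨_, ?_, 1, one_pos, fun h hh₀ hh₁ =>
    abs_mul_tsum_pow_mul_sub_integral_pow_succ_le (k := 5) (by norm_num) hc
      (abs_solitonQ_le (lam := lam) hp) (lipschitzWith_solitonQ hp) hh₀ hh₁.le⟩
  have hA : 0 < (Ω * (p + 1) / lam) ^ (1 / (2 * p)) := by positivity
  have hI := integral_exp_pos (integrable_exp_neg_mul_abs hc)
  have hK : 0 < ‖(Ω * (p + 1) / lam) ^ (1 / (2 * p))‖₊ * ((1 / p).toNNReal * ‖sqrt Ω * p‖₊) :=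
    mul_pos (nnnorm_pos.2 hA.ne')
      (mul_pos (Real.toNNReal_pos.2 (by positivity)) (nnnorm_pos.2 (by positivity)))
  positivity
end
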